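/- Let φ ∈ F, x_φ the solution of the delay equation, u(t) = S_t φ, and define L: F → ℝ by Lψ = a ψ(0) + Σ_{i=1}^∞ b_i ψ(−τ_i). Then for t+θ > 0, [u(t)](θ) = φ(0) + ∫₀^{t+θ} L(u(s)) ds, and for t+θ ≤ 0, [u(t)](θ) = φ(t+θ); consequently u is a mild solution of the abstract Cauchy problem u' = Au, u(0) = φ, where Aψ = ψ' on D(A) = {ψ ∈ F : ψ' ∈ F, ψ'(0) = Lψ}. -/

import Mathlib

open Filter Set MeasureTheory

/-- sup_{s ∈ [0, kτ₁]} |b_i φ(s − τ_i)|  (τ₁ = τ 0 with ℕ-indexing). -/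
noncomputable def pTerm (b τ : ℕ → ℝ) (φ : ℝ → ℝ) (k i : ℕ) : ℝ :=
  ⨆ s : Set.Icc (0:ℝ) ((k : ℝ) * τ 0), |b i * φ ((s : ℝ) - τ i)|

/-- The seminorm p_k(φ) = Σ_{i ≥ n(k)} sup_{s ∈ [0,kτ₁]} |b_i φ(s − τ_i)|. -/
noncomputable def pSemi (b τ : ℕ → ℝ) (n : ℕ → ℕ) (φ : ℝ → ℝ) (k : ℕ) : ℝ :=
  ∑' i : ℕ, pTerm b τ φ k (n k + i)

/-- The seminorm ‖φ‖_k = sup_{θ ∈ [−k,0]} |φ(θ)|. -/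
noncomputable def normSemi (φ : ℝ → ℝ) (k : ℕ) : ℝ :=
  ⨆ θ : Set.Icc (-(k:ℝ)) (0:ℝ), |φ (θ : ℝ)|

/-- n(k) is the smallest natural number such that τ_i ≥ kτ₁ for all i ≥ n(k). -/
def nSpec (τ : ℕ → ℝ) (n : ℕ → ℕ) : Prop :=
  ∀ k : ℕ, (∀ i, n k ≤ i → (k : ℝ) * τ 0 ≤ τ i) ∧
    ∀ m : ℕ, (∀ i, m ≤ i → (k : ℝ) * τ 0 ≤ τ i) → n k ≤ m

/-- Membership in the Fréchet space F: φ is continuous on (-∞,0] and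
p_k(φ) < ∞ (i.e. the defining series is summable) for every k. -/
def memF (b τ : ℕ → ℝ) (n : ℕ → ℕ) (φ : ℝ → ℝ) : Prop :=
  ContinuousOn φ (Set.Iic 0) ∧
    ∀ k : ℕ, Summable fun i => pTerm b τ φ k (n k + i)

/-- A solution of the infinite-delay equation with initial function φ. -/
def IsSolution (a : ℝ) (b τ : ℕ → ℝ) (φ x : ℝ → ℝ) : Prop :=
  Continuous x ∧ (∀ θ ≤ (0:ℝ), x θ = φ θ) ∧
  (∀ t ≥ (0:ℝ), Summable fun i => b i * x (t - τ i)) ∧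
  (∀ t ≥ (0:ℝ), HasDerivWithinAt x (a * x t + ∑' i, b i * x (t - τ i)) (Set.Ici 0) t) ∧
  ContinuousOn (fun t => a * x t + ∑' i, b i * x (t - τ i)) (Set.Ici 0)

/-!
The integral representation is the fundamental theorem of calculus for the delay equation.
Since v(t)(θ) = ∫₀ᵗ x(s + θ) ds = ∫_θ^{t+θ} x, the θ-derivative of v(t) is x(t + θ) − x(θ) and
its t-derivative is x(t + θ), which gives v' = A v + φ. For the seminorms, once τ_i ≥ k'τ₁ with
k'τ₁ ≥ t + kτ₁, the arguments s − τ_i (s ∈ [0, kτ₁]), even shifted by up to t, stay in (−∞, 0]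
where x = φ; so the i-th terms for v(t) and its derivative are dominated by those of p_{k'}(φ).
The same domination, uniform on [0, t], lets L be integrated term by term, which identifies
the θ-derivative of v(t) at 0 with L(v(t)).
-/

section Seminorms

variable {b τ : ℕ → ℝ} {n : ℕ → ℕ} {φ ψ x : ℝ → ℝ}

lemma pTerm_nonneg (b τ : ℕ → ℝ) (φ : ℝ → ℝ) (k i : ℕ) : 0 ≤ pTerm b τ φ k i :=
  Real.iSup_nonneg fun _ => abs_nonneg _

lemma pTerm_le {k i : ℕ} {C : ℝ} (hC : 0 ≤ C)
    (h : ∀ s ∈ Icc (0:ℝ) (k * τ 0), |b i * ψ (s - τ i)| ≤ C) : pTerm b τ ψ k i ≤ C :=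
  Real.iSup_le (fun s => h s s.2) hC

lemma abs_mul_le_pTerm (hφ : ContinuousOn φ (Iic 0)) {k i : ℕ} (hi : k * τ 0 ≤ τ i)
    {s : ℝ} (hs : s ∈ Icc (0:ℝ) (k * τ 0)) : |b i * φ (s - τ i)| ≤ pTerm b τ φ k i := by
  have hmaps : MapsTo (fun s => s - τ i) (Icc 0 (k * τ 0)) (Iic 0) :=
    fun s hs => sub_nonpos.2 (hs.2.trans hi)
  have hcont : ContinuousOn (fun s => |b i * φ (s - τ i)|) (Icc 0 (k * τ 0)) :=
    (continuousOn_const.mul (hφ.comp (by fun_prop) hmaps)).abs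
  refine le_ciSup (f := fun s : Icc (0:ℝ) (k * τ 0) => |b i * φ (s - τ i)|) ?_ ⟨s, hs⟩
  exact (isCompact_Icc.image_of_continuousOn hcont).bddAbove.mono (range_subset_iff.2 fun s =>
    mem_image_of_mem (fun s => |b i * φ (s - τ i)|) s.2)

lemma eventually_abs_mul_comp_sub_le_pTerm (hτtop : Tendsto τ atTop atTop)
    (hφ : ContinuousOn φ (Iic 0)) (hxφ : ∀ θ ≤ (0:ℝ), x θ = φ θ) (k' : ℕ) :
    ∀ᶠ i in atTop, ∀ u ∈ Icc (0:ℝ) (k' * τ 0), |b i * x (u - τ i)| ≤ pTerm b τ φ k' i := by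
  filter_upwards [hτtop.eventually_ge_atTop (k' * τ 0)] with i hi u hu
  rw [hxφ _ (sub_nonpos.2 (hu.2.trans hi))]
  exact abs_mul_le_pTerm hφ hi hu

lemma exists_le_nat_mul (hτ0 : 0 < τ 0) (r : ℝ) : ∃ k' : ℕ, r ≤ k' * τ 0 := by
  obtain ⟨k', hk'⟩ := Archimedean.arch r hτ0
  exact ⟨k', by rwa [nsmul_eq_mul] at hk'⟩

lemma summable_pTerm_add_iff (k m : ℕ) :
    (Summable fun i => pTerm b τ ψ k (m + i)) ↔ Summable (pTerm b τ ψ k) := by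
  simpa only [add_comm m] using summable_nat_add_iff (f := pTerm b τ ψ k) m

lemma memF_of_eventually_pTerm_le (hφ : memF b τ n φ) (hψ : ContinuousOn ψ (Iic 0)) (c : ℝ)
    (h : ∀ k, ∃ k', ∀ᶠ i in atTop, pTerm b τ ψ k i ≤ c * pTerm b τ φ k' i) :
    memF b τ n ψ := by
  refine ⟨hψ, fun k => ?_⟩
  obtain ⟨k', hk'⟩ := h k
  rw [summable_pTerm_add_iff]
  refine Summable.of_norm_bounded_eventually
    (((summable_pTerm_add_iff k' (n k')).1 (hφ.2 k')).mul_left c) ?_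
  rw [Nat.cofinite_eq_atTop]
  filter_upwards [hk'] with i hi
  rwa [Real.norm_of_nonneg (pTerm_nonneg b τ ψ k i)]

end Seminorms

section Solution

variable {a : ℝ} {b τ : ℕ → ℝ} {n : ℕ → ℕ} {φ x : ℝ → ℝ}

lemma IsSolution.intervalIntegrable (hx : IsSolution a b τ φ x) {T : ℝ} (hT : 0 ≤ T) :
    IntervalIntegrable (fun s => a * x s + ∑' i, b i * x (s - τ i)) volume 0 T :=
  (hx.2.2.2.2.mono fun _ hs => (uIcc_of_le hT ▸ hs).1).intervalIntegrable

lemma IsSolution.eq_add_integral (hx : IsSolution a b τ φ x) {T : ℝ} (hT : 0 ≤ T) :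
    x T = φ 0 + ∫ s in (0:ℝ)..T, (a * x s + ∑' i, b i * x (s - τ i)) := by
  obtain ⟨hxc, hxφ, -, hxderiv, -⟩ := id hx
  rw [intervalIntegral.integral_eq_sub_of_hasDeriv_right_of_le hT hxc.continuousOn
    (fun s hs => ((hxderiv s hs.1.le).hasDerivAt (Ici_mem_nhds hs.1)).hasDerivWithinAt)
    (hx.intervalIntegrable hT), hxφ 0 le_rfl]
  ring

lemma hasDerivAt_integral_comp_add_right (hx : Continuous x) (t θ : ℝ) :
    HasDerivAt (fun θ' => ∫ s in (0:ℝ)..t, x (s + θ')) (x (t + θ) - x θ) θ := by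
  have hv : (fun θ' => ∫ s in (0:ℝ)..t, x (s + θ')) =
      fun θ' => (∫ s in (0:ℝ)..t + θ', x s) - ∫ s in (0:ℝ)..θ', x s := by
    funext θ'
    rw [intervalIntegral.integral_comp_add_right, zero_add,
      intervalIntegral.integral_interval_sub_left (hx.intervalIntegrable _ _)
        (hx.intervalIntegrable _ _)]
  rw [hv]
  exact ((hx.integral_hasStrictDerivAt 0 (t + θ)).hasDerivAt.comp_const_add t θ).sub
    (hx.integral_hasStrictDerivAt 0 θ).hasDerivAt

lemma memF_comp_add_sub (hτ0 : 0 < τ 0) (hτtop : Tendsto τ atTop atTop) (hφ : memF b τ n φ)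
    (hx : Continuous x) (hxφ : ∀ θ ≤ (0:ℝ), x θ = φ θ) {t : ℝ} (ht : 0 ≤ t) :
    memF b τ n (fun θ => x (t + θ) - x θ) := by
  refine memF_of_eventually_pTerm_le hφ (by fun_prop) 2 fun k => ?_
  obtain ⟨k', hk'⟩ := exists_le_nat_mul hτ0 (t + k * τ 0)
  refine ⟨k', ?_⟩
  filter_upwards [eventually_abs_mul_comp_sub_le_pTerm hτtop hφ.1 hxφ k'] with i hi
  refine pTerm_le (mul_nonneg zero_le_two (pTerm_nonneg b τ φ k' i)) fun s hs => ?_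
  have hk : (k:ℝ) * τ 0 ≤ k' * τ 0 := by linarith
  calc |b i * (x (t + (s - τ i)) - x (s - τ i))|
      = |b i * x ((t + s) - τ i) - b i * x (s - τ i)| := by rw [mul_sub, add_sub_assoc]
    _ ≤ |b i * x ((t + s) - τ i)| + |b i * x (s - τ i)| := abs_sub _ _
    _ ≤ pTerm b τ φ k' i + pTerm b τ φ k' i :=
        add_le_add (hi _ ⟨by linarith [hs.1], by linarith [hs.2]⟩) (hi _ ⟨hs.1, hs.2.trans hk⟩)
    _ = 2 * pTerm b τ φ k' i := by ring

lemma memF_integral_comp_add_right (hτ0 : 0 < τ 0) (hτtop : Tendsto τ atTop atTop)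
    (hφ : memF b τ n φ) (hx : Continuous x) (hxφ : ∀ θ ≤ (0:ℝ), x θ = φ θ) {t : ℝ}
    (ht : 0 ≤ t) : memF b τ n (fun θ => ∫ s in (0:ℝ)..t, x (s + θ)) := by
  have hcont : Continuous fun θ => ∫ s in (0:ℝ)..t, x (s + θ) :=
    continuous_iff_continuousAt.2 fun θ =>
      (hasDerivAt_integral_comp_add_right hx t θ).continuousAt
  refine memF_of_eventually_pTerm_le hφ hcont.continuousOn t fun k => ?_
  obtain ⟨k', hk'⟩ := exists_le_nat_mul hτ0 (t + k * τ 0)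
  refine ⟨k', ?_⟩
  filter_upwards [eventually_abs_mul_comp_sub_le_pTerm hτtop hφ.1 hxφ k'] with i hi
  refine pTerm_le (mul_nonneg ht (pTerm_nonneg b τ φ k' i)) fun s hs => ?_
  have hbound : ∀ σ ∈ uIoc 0 t, ‖b i * x (σ + (s - τ i))‖ ≤ pTerm b τ φ k' i := by
    intro σ hσ
    rw [uIoc_of_le ht] at hσ
    rw [Real.norm_eq_abs, ← add_sub_assoc]
    exact hi _ ⟨by linarith [hσ.1, hs.1], by linarith [hσ.2, hs.2]⟩
  calc |b i * ∫ σ in (0:ℝ)..t, x (σ + (s - τ i))|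
      = ‖∫ σ in (0:ℝ)..t, b i * x (σ + (s - τ i))‖ := by
        rw [intervalIntegral.integral_const_mul, Real.norm_eq_abs]
    _ ≤ pTerm b τ φ k' i * |t - 0| := intervalIntegral.norm_integral_le_of_norm_le_const hbound
    _ = t * pTerm b τ φ k' i := by rw [sub_zero, abs_of_nonneg ht, mul_comm]

lemma integral_tsum_mul_comp_sub (hτ0 : 0 < τ 0) (hτtop : Tendsto τ atTop atTop)
    (hφ : memF b τ n φ) (hx : Continuous x) (hxφ : ∀ θ ≤ (0:ℝ), x θ = φ θ) {t : ℝ}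
    (ht : 0 ≤ t) :
    ∫ s in (0:ℝ)..t, ∑' i, b i * x (s - τ i) = ∑' i, b i * ∫ s in (0:ℝ)..t, x (s - τ i) := by
  obtain ⟨k', hk'⟩ := exists_le_nat_mul hτ0 t
  let G : ℕ → C(ℝ, ℝ) := fun i => ⟨fun s => b i * x (s - τ i), by fun_prop⟩
  have hG : Summable fun i =>
      ‖(G i).restrict (⟨uIcc 0 t, isCompact_uIcc⟩ : TopologicalSpace.Compacts ℝ)‖ := by
    refine Summable.of_norm_bounded_eventually
      ((summable_pTerm_add_iff k' (n k')).1 (hφ.2 k')) ?_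
    rw [Nat.cofinite_eq_atTop]
    filter_upwards [eventually_abs_mul_comp_sub_le_pTerm (b := b) hτtop hφ.1 hxφ k'] with i hi
    rw [norm_norm]
    refine (ContinuousMap.norm_le _ (pTerm_nonneg b τ φ k' i)).2 fun ⟨s, hs⟩ => ?_
    have hs' : s ∈ Icc 0 t := by simpa [uIcc_of_le ht] using hs
    exact hi s ⟨hs'.1, hs'.2.trans hk'⟩
  refine (intervalIntegral.tsum_intervalIntegral_eq_of_summable_norm hG).symm.trans ?_
  exact tsum_congr fun i => intervalIntegral.integral_const_mul _ _

lemma IsSolution.integral_rhs_eq (hx : IsSolution a b τ φ x) (hτ0 : 0 < τ 0)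
    (hτtop : Tendsto τ atTop atTop) (hφ : memF b τ n φ) {t : ℝ} (ht : 0 ≤ t) :
    ∫ s in (0:ℝ)..t, (a * x s + ∑' i, b i * x (s - τ i)) =
      a * (∫ s in (0:ℝ)..t, x s) + ∑' i, b i * ∫ s in (0:ℝ)..t, x (s - τ i) := by
  have hlin : IntervalIntegrable (fun s => a * x s) volume 0 t :=
    (continuous_const.mul hx.1).intervalIntegrable 0 t
  have hdelay : IntervalIntegrable (fun s => ∑' i, b i * x (s - τ i)) volume 0 t := by
    simpa using (hx.intervalIntegrable ht).sub hlin
  rw [intervalIntegral.integral_add hlin hdelay, intervalIntegral.integral_const_mul,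
    integral_tsum_mul_comp_sub hτ0 hτtop hφ hx.1 hx.2.1 ht]

end Solution

theorem mild_solution_general (a : ℝ) (b τ : ℕ → ℝ) (n : ℕ → ℕ)
    (hτpos : ∀ i, 0 < τ i)
    (hτtop : Tendsto τ atTop atTop)
    (φ : ℝ → ℝ) (hφ : memF b τ n φ)
    (x : ℝ → ℝ) (hx : IsSolution a b τ φ x) :
    -- the integral representation of u(t) = x(t + ·)
    (∀ t ≥ (0:ℝ), ∀ θ ≤ (0:ℝ),
      (0 < t + θ → x (t + θ) =
        φ 0 + ∫ s in (0:ℝ)..(t + θ), (a * x s + ∑' i, b i * x (s - τ i))) ∧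
      (t + θ ≤ 0 → x (t + θ) = φ (t + θ))) ∧
    -- u is a mild solution: v(t)(θ) = ∫₀ᵗ x(s+θ) ds lies in D(A) and
    -- d/dt v(t) = A v(t) + φ (pointwise in θ)
    (∀ t ≥ (0:ℝ),
      memF b τ n (fun θ => ∫ s in (0:ℝ)..t, x (s + θ)) ∧
      memF b τ n (fun θ => deriv (fun θ' => ∫ s in (0:ℝ)..t, x (s + θ')) θ) ∧
      deriv (fun θ' => ∫ s in (0:ℝ)..t, x (s + θ')) 0 =
        a * (∫ s in (0:ℝ)..t, x s) + ∑' i, b i * ∫ s in (0:ℝ)..t, x (s - τ i) ∧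
      ∀ θ ≤ (0:ℝ), HasDerivWithinAt (fun r => ∫ s in (0:ℝ)..r, x (s + θ))
        (deriv (fun θ' => ∫ s in (0:ℝ)..t, x (s + θ')) θ + φ θ) (Set.Ici 0) t) := by
  have hxc := hx.1
  have hxφ := hx.2.1
  refine ⟨fun t _ θ _ => ⟨fun h => hx.eq_add_integral h.le, hxφ _⟩, fun t ht => ?_⟩
  have hw : (fun θ => deriv (fun θ' => ∫ s in (0:ℝ)..t, x (s + θ')) θ) =
      fun θ => x (t + θ) - x θ :=
    funext fun θ => (hasDerivAt_integral_comp_add_right hxc t θ).deriv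
  have hτ0 := hτpos 0
  refine ⟨memF_integral_comp_add_right hτ0 hτtop hφ hxc hxφ ht, hw ▸
    memF_comp_add_sub hτ0 hτtop hφ hxc hxφ ht, ?_, fun θ hθ => ?_⟩
  · rw [congrFun hw 0, add_zero, hx.eq_add_integral ht, ← hxφ 0 le_rfl,
      hx.integral_rhs_eq hτ0 hτtop hφ ht, add_sub_cancel_left]
  · rw [congrFun hw θ, ← hxφ θ hθ, sub_add_cancel]
    exact ((hxc.comp (continuous_add_const θ)).integral_hasStrictDerivAt 0 t).hasDerivAt
      |>.hasDerivWithinAt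

/-- With u(t) = S_t φ = x(t + ·) and Lψ = aψ(0) + Σᵢ bᵢψ(−τᵢ):
for t+θ > 0, [u(t)](θ) = φ(0) + ∫₀^{t+θ} L(u(s)) ds, and for t+θ ≤ 0,
[u(t)](θ) = φ(t+θ).  Consequently u is a mild solution of u' = Au, u(0) = φ:
with v(t) = ∫₀ᵗ u(s) ds (pointwise v(t)(θ) = ∫₀ᵗ x(s+θ) ds), v(t) ∈ D(A)
(v(t) ∈ F, v(t)' ∈ F, v(t)'(0) = L(v(t))) and v'(t) = A(v(t)) + φ. -/
theorem mild_solution (a : ℝ) (b τ : ℕ → ℝ) (n : ℕ → ℕ)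
    (hτ : StrictMono τ) (hτpos : ∀ i, 0 < τ i)
    (hτtop : Tendsto τ atTop atTop) (hn : nSpec τ n)
    (φ : ℝ → ℝ) (hφ : memF b τ n φ)
    (x : ℝ → ℝ) (hx : IsSolution a b τ φ x) :
    -- the integral representation of u(t) = x(t + ·)
    (∀ t ≥ (0:ℝ), ∀ θ ≤ (0:ℝ),
      (0 < t + θ → x (t + θ) =
        φ 0 + ∫ s in (0:ℝ)..(t + θ), (a * x s + ∑' i, b i * x (s - τ i))) ∧
      (t + θ ≤ 0 → x (t + θ) = φ (t + θ))) ∧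
    -- u is a mild solution: v(t)(θ) = ∫₀ᵗ x(s+θ) ds lies in D(A) and
    -- d/dt v(t) = A v(t) + φ (pointwise in θ)
    (∀ t ≥ (0:ℝ),
      memF b τ n (fun θ => ∫ s in (0:ℝ)..t, x (s + θ)) ∧
      memF b τ n (fun θ => deriv (fun θ' => ∫ s in (0:ℝ)..t, x (s + θ')) θ) ∧
      deriv (fun θ' => ∫ s in (0:ℝ)..t, x (s + θ')) 0 =
        a * (∫ s in (0:ℝ)..t, x s) + ∑' i, b i * ∫ s in (0:ℝ)..t, x (s - τ i) ∧
      ∀ θ ≤ (0:ℝ), HasDerivWithinAt (fun r => ∫ s in (0:ℝ)..r, x (s + θ))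
        (deriv (fun θ' => ∫ s in (0:ℝ)..t, x (s + θ')) θ + φ θ) (Set.Ici 0) t) :=
  mild_solution_general a b τ n hτpos hτtop φ hφ x hx
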